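/- Let t be an infinite word over {0,1,2} such that its abelian complexity satisfies ρ_t(n) = 3 for all n ≥ 1, and let S_0, S_1, S_2 be positive integers with (φ−1)(S_0+S_2) + 2(2−φ)S_1 > 6 where φ = (1+√5)/2, and suppose the maximum of S over length-n factors of t is at least (1/2)⌊nφ⌋(S_0−2S_1+S_2) − (1/2)n(S_0−4S_1+S_2) + C for some constant C and all n. Then { S(u) : u a factor of t }, where S(u) = S_0|u|_0 + S_1|u|_1 + S_2|u|_2, has upper natural density strictly less than 1 in ℕ; in particular its complement in ℕ is infinite. -/
import Mathlib


/-- the length-`n` factor of `w` starting at position `i`. -/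
def factorAt (w : ℕ → ℕ) (i n : ℕ) : List ℕ := (List.range n).map (fun j => w (i + j))

/-- `u` is a factor of the infinite word `w`. -/
def IsFactor (w : ℕ → ℕ) (u : List ℕ) : Prop := ∃ i, u = factorAt w i u.length

/-- `S(u) = S₀|u|₀ + S₁|u|₁ + S₂|u|₂`. -/
def Sval (S0 S1 S2 : ℕ) (u : List ℕ) : ℕ :=
  S0 * u.count 0 + S1 * u.count 1 + S2 * u.count 2

lemma factorAt_length (w : ℕ → ℕ) (i n : ℕ) : (factorAt w i n).length = n := by
  simp [factorAt]

lemma factorAt_succ_right (w : ℕ → ℕ) (i n : ℕ) :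
    factorAt w i (n+1) = factorAt w i n ++ [w (i+n)] := by
  simp [factorAt, List.range_succ]

lemma factorAt_succ_left (w : ℕ → ℕ) (i n : ℕ) :
    factorAt w i (n+1) = w i :: factorAt w (i+1) n := by
  simp only [factorAt, List.range_succ_eq_map, List.map_cons, List.map_map]
  refine congrArg₂ _ (by simp) (List.map_congr_left ?_)
  intro j _
  simp [Function.comp]
  ring_nf

lemma count_step (w : ℕ → ℕ) (a n i : ℕ) :
    (factorAt w i n).count a + (if w (i+n) = a then 1 else 0)
      = (if w i = a then 1 else 0) + (factorAt w (i+1) n).count a := by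
  have h1 : (factorAt w i (n+1)).count a
      = (factorAt w i n).count a + (if w (i+n) = a then 1 else 0) := by
    rw [factorAt_succ_right]
    simp [List.count_append, List.count_cons, List.count_nil]
  have h2 : (factorAt w i (n+1)).count a
      = (if w i = a then 1 else 0) + (factorAt w (i+1) n).count a := by
    rw [factorAt_succ_left]
    simp [List.count_cons]
    omega
  omega

lemma ivt_up (f : ℕ → ℕ) (h : ∀ i, f (i+1) ≤ f i + 1) :
    ∀ d i k, f i ≤ k → k ≤ f (i+d) → ∃ m, f m = k := by
  intro d
  induction d with
  | zero => exact fun i k h1 h2 => ⟨i, le_antisymm h1 (by simpa using h2)⟩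
  | succ d ih =>
    intro i k h1 h2
    have h2' : k ≤ f (i+d+1) := h2
    by_cases hc : k ≤ f (i+d)
    · exact ih i k h1 hc
    · exact ⟨i+d+1, by have := h (i+d); omega⟩

lemma ivt_down (f : ℕ → ℕ) (h : ∀ i, f i ≤ f (i+1) + 1) :
    ∀ d i k, k ≤ f i → f (i+d) ≤ k → ∃ m, f m = k := by
  intro d
  induction d with
  | zero => exact fun i k h1 h2 => ⟨i, le_antisymm (by simpa using h2) h1⟩
  | succ d ih =>
    intro i k h1 h2
    have h2' : f (i+d+1) ≤ k := h2
    by_cases hc : f (i+d) ≤ k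
    · exact ih i k h1 hc
    · exact ⟨i+d+1, by have := h (i+d); omega⟩

lemma ivt (f : ℕ → ℕ) (h1 : ∀ i, f (i+1) ≤ f i + 1) (h2 : ∀ i, f i ≤ f (i+1) + 1)
    (i j k : ℕ) (hik : f i ≤ k) (hkj : k ≤ f j) : ∃ m, f m = k := by
  rcases le_total i j with hij | hij
  · obtain ⟨d, rfl⟩ := Nat.exists_eq_add_of_le hij
    exact ivt_up f h1 d i k hik hkj
  · obtain ⟨d, rfl⟩ := Nat.exists_eq_add_of_le hij
    exact ivt_down f h2 d j k hkj hik

lemma width_aux {P : Set (ℕ × ℕ × ℕ)} (hP : P.ncard = 3)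
    (f : ℕ → ℕ) (proj : ℕ × ℕ × ℕ → ℕ)
    (hmem : ∀ i, ∃ p ∈ P, proj p = f i)
    (h1 : ∀ i, f (i+1) ≤ f i + 1) (h2 : ∀ i, f i ≤ f (i+1) + 1)
    (i j : ℕ) : f i ≤ f j + 2 := by
  by_contra hc
  push_neg at hc
  have hPfin : P.Finite := Set.finite_of_ncard_ne_zero (by omega)
  have hsub : Set.Icc (f j) (f j + 3) ⊆ proj '' P := by
    intro k hk
    obtain ⟨m, hm⟩ := ivt f h1 h2 j i k hk.1 (by have := hk.2; omega)
    obtain ⟨p, hp, hpe⟩ := hmem m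
    exact ⟨p, hp, by rw [hpe, hm]⟩
  have h4 : (Set.Icc (f j) (f j + 3)).ncard = 4 := by
    rw [← Finset.coe_Icc, Set.ncard_coe_finset, Nat.card_Icc]
    omega
  have hle := Set.ncard_le_ncard hsub (hPfin.image _)
  have him := Set.ncard_image_le (f := proj) hPfin
  omega

lemma count_close (t : ℕ → ℕ) (n : ℕ)
    (hP : {p : ℕ × ℕ × ℕ | ∃ u : List ℕ, IsFactor t u ∧ u.length = n ∧
        p = (u.count 0, u.count 1, u.count 2)}.ncard = 3)
    (a : ℕ) (ha : a ≤ 2) (i j : ℕ) :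
    (factorAt t i n).count a ≤ (factorAt t j n).count a + 2 := by
  set P := {p : ℕ × ℕ × ℕ | ∃ u : List ℕ, IsFactor t u ∧ u.length = n ∧
      p = (u.count 0, u.count 1, u.count 2)} with hPdef
  have hmem : ∀ i : ℕ,
      ((factorAt t i n).count 0, (factorAt t i n).count 1, (factorAt t i n).count 2) ∈ P :=
    fun i => ⟨factorAt t i n, ⟨i, by rw [factorAt_length]⟩, factorAt_length t i n, rfl⟩
  have h1 : ∀ b : ℕ, ∀ i : ℕ,
      (factorAt t (i+1) n).count b ≤ (factorAt t i n).count b + 1 := by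
    intro b i
    have := count_step t b n i
    split_ifs at this <;> omega
  have h2 : ∀ b : ℕ, ∀ i : ℕ,
      (factorAt t i n).count b ≤ (factorAt t (i+1) n).count b + 1 := by
    intro b i
    have := count_step t b n i
    split_ifs at this <;> omega
  interval_cases a
  · exact width_aux hP (fun i => (factorAt t i n).count 0) (fun p => p.1)
      (fun i => ⟨_, hmem i, rfl⟩) (h1 0) (h2 0) i j
  · exact width_aux hP (fun i => (factorAt t i n).count 1) (fun p => p.2.1)
      (fun i => ⟨_, hmem i, rfl⟩) (h1 1) (h2 1) i j
  · exact width_aux hP (fun i => (factorAt t i n).count 2) (fun p => p.2.2)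
      (fun i => ⟨_, hmem i, rfl⟩) (h1 2) (h2 2) i j

lemma sval_close (t : ℕ → ℕ) (S0 S1 S2 : ℕ) (n : ℕ)
    (hP : {p : ℕ × ℕ × ℕ | ∃ u : List ℕ, IsFactor t u ∧ u.length = n ∧
        p = (u.count 0, u.count 1, u.count 2)}.ncard = 3)
    (u v : List ℕ) (hu : IsFactor t u) (hv : IsFactor t v)
    (hlu : u.length = n) (hlv : v.length = n) :
    Sval S0 S1 S2 u ≤ Sval S0 S1 S2 v + 2 * (S0 + S1 + S2) := by
  obtain ⟨i, hi⟩ := hu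
  obtain ⟨j, hj⟩ := hv
  rw [hlu] at hi; rw [hlv] at hj
  subst hi; subst hj
  have e0 := count_close t n hP 0 (by omega) i j
  have e1 := count_close t n hP 1 (by omega) i j
  have e2 := count_close t n hP 2 (by omega) i j
  have m0 : S0 * (factorAt t i n).count 0 ≤ S0 * (factorAt t j n).count 0 + 2 * S0 := by
    calc S0 * (factorAt t i n).count 0 ≤ S0 * ((factorAt t j n).count 0 + 2) :=
          Nat.mul_le_mul_left _ e0
      _ = S0 * (factorAt t j n).count 0 + 2 * S0 := by ring
  have m1 : S1 * (factorAt t i n).count 1 ≤ S1 * (factorAt t j n).count 1 + 2 * S1 := by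
    calc S1 * (factorAt t i n).count 1 ≤ S1 * ((factorAt t j n).count 1 + 2) :=
          Nat.mul_le_mul_left _ e1
      _ = S1 * (factorAt t j n).count 1 + 2 * S1 := by ring
  have m2 : S2 * (factorAt t i n).count 2 ≤ S2 * (factorAt t j n).count 2 + 2 * S2 := by
    calc S2 * (factorAt t i n).count 2 ≤ S2 * ((factorAt t j n).count 2 + 2) :=
          Nat.mul_le_mul_left _ e2
      _ = S2 * (factorAt t j n).count 2 + 2 * S2 := by ring
  simp only [Sval]
  have : 2 * (S0 + S1 + S2) = 2 * S0 + 2 * S1 + 2 * S2 := by ring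
  omega

set_option maxHeartbeats 1000000 in
/-- Let `t` be an infinite ternary word with abelian complexity `ρ(n) = 3` for all
`n ≥ 1`, and `S₀, S₁, S₂` positive with `(φ-1)(S₀+S₂) + 2(2-φ)S₁ > 6`. If the maximum
of `S` over length-`n` factors is at least `(1/2)⌊nφ⌋(S₀-2S₁+S₂) - (1/2)n(S₀-4S₁+S₂) + C`
for some constant `C` and all `n ≥ 1`, then `S(L_t)` has upper density `< 1` and its
complement in ℕ is infinite. -/
theorem ternary_not_frobenius (t : ℕ → ℕ) (ht : ∀ i, t i ≤ 2)
    (hrho : ∀ n : ℕ, 1 ≤ n →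
      {p : ℕ × ℕ × ℕ | ∃ u : List ℕ, IsFactor t u ∧ u.length = n ∧
        p = (u.count 0, u.count 1, u.count 2)}.ncard = 3)
    (S0 S1 S2 : ℕ) (h0 : 0 < S0) (h1 : 0 < S1) (h2 : 0 < S2)
    (φ : ℝ) (hφ : φ = (1 + Real.sqrt 5) / 2)
    (hden : 6 < (φ - 1) * ((S0 : ℝ) + S2) + 2 * (2 - φ) * S1)
    (C : ℝ)
    (hmax : ∀ n : ℕ, 1 ≤ n → ∃ u : List ℕ, IsFactor t u ∧ u.length = n ∧
      (1 / 2) * (⌊(n : ℝ) * φ⌋ : ℝ) * ((S0 : ℝ) - 2 * S1 + S2)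
          - (1 / 2) * (n : ℝ) * ((S0 : ℝ) - 4 * S1 + S2) + C
        ≤ (Sval S0 S1 S2 u : ℝ)) :
    Filter.limsup (fun n : ℕ =>
        ((({m : ℕ | ∃ u : List ℕ, IsFactor t u ∧ m = Sval S0 S1 S2 u} ∩
            Set.Icc 1 n).ncard : ℝ) / n)) Filter.atTop < 1 ∧
    {m : ℕ | ¬ ∃ u : List ℕ, IsFactor t u ∧ m = Sval S0 S1 S2 u}.Infinite := by
  classical
  set A := {m : ℕ | ∃ u : List ℕ, IsFactor t u ∧ m = Sval S0 S1 S2 u} with hAdef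
  obtain ⟨α, hαdef⟩ : ∃ α : ℝ, α = ((φ - 1) * ((S0 : ℝ) + S2) + 2 * (2 - φ) * S1) / 2 :=
    ⟨_, rfl⟩
  have hα3 : 3 < α := by rw [hαdef]; linarith
  have hαpos : (0 : ℝ) < α := by linarith
  obtain ⟨c, hcdef⟩ : ∃ c : ℝ, c = (S0 : ℝ) - 2 * S1 + S2 := ⟨_, rfl⟩
  obtain ⟨B, hBdef⟩ : ∃ B : ℝ, B = 2 * ((S0 : ℝ) + S1 + S2) := ⟨_, rfl⟩
  obtain ⟨Cr, hCrdef⟩ : ∃ Cr : ℝ, Cr = C - |c| / 2 - B := ⟨_, rfl⟩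
  -- lower bound on S-values of length-n factors
  have hlow : ∀ n : ℕ, 1 ≤ n → ∀ u : List ℕ, IsFactor t u → u.length = n →
      α * n + Cr ≤ (Sval S0 S1 S2 u : ℝ) := by
    intro n hn u hu hlen
    obtain ⟨v, hv, hvlen, hvS⟩ := hmax n hn
    have hcloseN := sval_close t S0 S1 S2 n (hrho n hn) v u hv hu hvlen hlen
    have hclose : (Sval S0 S1 S2 v : ℝ) ≤ (Sval S0 S1 S2 u : ℝ) + B := by
      rw [hBdef]
      exact_mod_cast (by exact_mod_cast hcloseN : (Sval S0 S1 S2 v : ℝ)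
        ≤ (Sval S0 S1 S2 u : ℝ) + ((2 * (S0 + S1 + S2) : ℕ) : ℝ))
    have hfl : (n : ℝ) * φ * c - |c| ≤ (⌊(n : ℝ) * φ⌋ : ℝ) * c := by
      have hf1 : ((⌊(n : ℝ) * φ⌋ : ℝ)) ≤ (n : ℝ) * φ := Int.floor_le _
      have hf2 : (n : ℝ) * φ - 1 < (⌊(n : ℝ) * φ⌋ : ℝ) := Int.sub_one_lt_floor _
      rcases le_or_gt 0 c with hc0 | hc0
      · nlinarith [le_abs_self c]
      · nlinarith [neg_abs_le c]
    have hid : α * (n : ℝ) = (1 / 2) * ((n : ℝ) * φ * c)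
        - (1 / 2) * (n : ℝ) * ((S0 : ℝ) - 4 * S1 + S2) := by
      rw [hαdef, hcdef]; ring
    have hvc : (1 / 2) * ((⌊(n : ℝ) * φ⌋ : ℝ) * c)
          - (1 / 2) * (n : ℝ) * ((S0 : ℝ) - 4 * S1 + S2) + C
        ≤ (Sval S0 S1 S2 v : ℝ) := by rw [hcdef]; linarith [hvS]
    rw [hCrdef]
    linarith
  -- at most three S-values per length
  have hV3 : ∀ n : ℕ, 1 ≤ n → ∃ F : Finset ℕ, F.card ≤ 3 ∧
      ∀ m : ℕ, (∃ u : List ℕ, IsFactor t u ∧ u.length = n ∧ m = Sval S0 S1 S2 u) → m ∈ F := by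
    intro n hn
    set P := {p : ℕ × ℕ × ℕ | ∃ u : List ℕ, IsFactor t u ∧ u.length = n ∧
        p = (u.count 0, u.count 1, u.count 2)} with hPdef
    have hPn : P.ncard = 3 := hrho n hn
    have hPfin : P.Finite := Set.finite_of_ncard_ne_zero (by omega)
    set g : ℕ × ℕ × ℕ → ℕ := fun p => S0 * p.1 + S1 * p.2.1 + S2 * p.2.2 with hgdef
    refine ⟨(hPfin.image g).toFinset, ?_, ?_⟩
    · calc (hPfin.image g).toFinset.card = (g '' P).ncard :=
            (Set.ncard_eq_toFinset_card _ (hPfin.image g)).symm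
        _ ≤ P.ncard := Set.ncard_image_le hPfin
        _ = 3 := hPn
    · rintro m ⟨u, hu, hul, rfl⟩
      rw [Set.Finite.mem_toFinset]
      exact ⟨(u.count 0, u.count 1, u.count 2), ⟨u, hu, hul, rfl⟩, rfl⟩
  choose F hF3 hFmem using hV3
  obtain ⟨G, hGdef⟩ : ∃ G : ℕ → Finset ℕ,
      G = fun n => if h : 1 ≤ n then F n h else ∅ := ⟨_, rfl⟩
  have hGeq : ∀ n (hn : 1 ≤ n), G n = F n hn := by
    intro n hn; rw [hGdef]; simp [hn]
  have hcount : ∀ N : ℕ, ((A ∩ Set.Icc 1 N).ncard : ℝ) ≤ 3 * (((N : ℝ) + |Cr|) / α + 1) := by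
    intro N
    obtain ⟨K, hKdef⟩ : ∃ K : ℕ, K = ⌈((N : ℝ) - Cr) / α⌉₊ := ⟨_, rfl⟩
    have hsub : A ∩ Set.Icc 1 N ⊆ ↑((Finset.Icc 1 K).biUnion G) := by
      intro m hm
      obtain ⟨hmA, hm1N⟩ := hm
      rw [hAdef] at hmA
      obtain ⟨u, hu, hmval⟩ := hmA
      rw [Set.mem_Icc] at hm1N
      obtain ⟨hm1, hmN⟩ := hm1N
      have hn1 : 1 ≤ u.length := by
        by_contra h
        have h0 : u.length = 0 := by omega
        have : u = [] := List.length_eq_zero_iff.mp h0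
        rw [this] at hmval
        simp [Sval] at hmval
        omega
      have hnK : u.length ≤ K := by
        have hl := hlow u.length hn1 u hu rfl
        have hmN' : ((Sval S0 S1 S2 u : ℕ) : ℝ) ≤ (N : ℝ) := by
          have : Sval S0 S1 S2 u ≤ N := by omega
          exact_mod_cast this
        have hx : (u.length : ℝ) ≤ ((N : ℝ) - Cr) / α := by
          rw [le_div_iff₀ hαpos]
          nlinarith
        have hy := hx.trans (Nat.le_ceil _)
        rw [hKdef]
        exact_mod_cast hy
      rw [Finset.mem_coe, Finset.mem_biUnion]
      refine ⟨u.length, Finset.mem_Icc.mpr ⟨hn1, hnK⟩, ?_⟩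
      rw [hGeq _ hn1]
      exact hFmem u.length hn1 m ⟨u, hu, rfl, hmval⟩
    have hfin : (↑((Finset.Icc 1 K).biUnion G) : Set ℕ).Finite := Finset.finite_toSet _
    have hb1 : (A ∩ Set.Icc 1 N).ncard ≤ ((Finset.Icc 1 K).biUnion G).card := by
      rw [← Set.ncard_coe_finset]
      exact Set.ncard_le_ncard hsub hfin
    have hb2 : ((Finset.Icc 1 K).biUnion G).card ≤ (Finset.Icc 1 K).card * 3 := by
      apply Finset.card_biUnion_le_card_mul
      intro n hn
      rw [hGeq _ (Finset.mem_Icc.mp hn).1]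
      exact hF3 n (Finset.mem_Icc.mp hn).1
    have hb3 : (Finset.Icc 1 K).card ≤ K := by rw [Nat.card_Icc]; omega
    have hKc : (K : ℝ) ≤ ((N : ℝ) + |Cr|) / α + 1 := by
      have hq : (0:ℝ) ≤ ((N : ℝ) + |Cr|) / α := by
        apply div_nonneg _ hαpos.le
        have := abs_nonneg Cr
        positivity
      have hx : ((N : ℝ) - Cr) / α ≤ ((N : ℝ) + |Cr|) / α := by
        exact (div_le_div_iff_of_pos_right hαpos).mpr (by linarith [neg_le_abs Cr])
      rcases le_or_gt (((N : ℝ) - Cr) / α) 0 with h | h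
      · have : K = 0 := by rw [hKdef]; exact Nat.ceil_eq_zero.mpr h
        rw [this]
        simpa using by linarith
      · have hcc := Nat.ceil_lt_add_one h.le
        rw [hKdef]
        linarith
    have hcast : ((A ∩ Set.Icc 1 N).ncard : ℝ) ≤ (K : ℝ) * 3 := by
      have : (A ∩ Set.Icc 1 N).ncard ≤ K * 3 := le_trans hb1 (le_trans hb2
        (Nat.mul_le_mul_right 3 hb3))
      exact_mod_cast this
    linarith
  -- the eventual bound
  obtain ⟨r, hrdef⟩ : ∃ r : ℝ, r = (3 / α + 1) / 2 := ⟨_, rfl⟩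
  have h3α : 3 / α < 1 := (div_lt_one hαpos).mpr (by linarith)
  have h3αpos : 0 ≤ 3 / α := by positivity
  have hr1 : r < 1 := by rw [hrdef]; linarith
  have h3r : 3 / α < r := by rw [hrdef]; linarith
  have hrgap : 0 < r - 3 / α := by linarith
  obtain ⟨D, hDdef⟩ : ∃ D : ℝ, D = 3 * |Cr| / α + 3 := ⟨_, rfl⟩
  obtain ⟨N0, hN0def⟩ : ∃ N0 : ℕ, N0 = max 1 ⌈D / (r - 3 / α)⌉₊ := ⟨_, rfl⟩
  have hkey : ∀ N : ℕ, N0 ≤ N → ((A ∩ Set.Icc 1 N).ncard : ℝ) ≤ r * N := by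
    intro N hN
    rw [hN0def] at hN
    have hN1 : 1 ≤ N := le_trans (le_max_left _ _) hN
    have hNpos : (0:ℝ) < N := by exact_mod_cast hN1
    have hND : D / (r - 3 / α) ≤ (N : ℝ) := by
      have h1 : (⌈D / (r - 3 / α)⌉₊ : ℕ) ≤ N := le_trans (le_max_right 1 _) hN
      have h2 : ((⌈D / (r - 3 / α)⌉₊ : ℕ) : ℝ) ≤ (N : ℝ) := Nat.cast_le.mpr h1
      exact le_trans (Nat.le_ceil _) h2
    have hDN : D ≤ (r - 3 / α) * N := by
      rw [div_le_iff₀ hrgap] at hND; linarith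
    have hc := hcount N
    have hexp : 3 * (((N : ℝ) + |Cr|) / α + 1) = 3 / α * N + D := by
      rw [hDdef]; field_simp; ring
    calc ((A ∩ Set.Icc 1 N).ncard : ℝ) ≤ 3 / α * N + D := by rw [← hexp]; exact hc
      _ ≤ 3 / α * N + (r - 3 / α) * N := by linarith
      _ = r * N := by ring
  constructor
  · have hb : Filter.IsCoboundedUnder (· ≤ ·) Filter.atTop
        (fun n : ℕ => ((A ∩ Set.Icc 1 n).ncard : ℝ) / n) :=
      Filter.isCoboundedUnder_le_of_le Filter.atTop (x := 0)
        (fun n => div_nonneg (Nat.cast_nonneg _) (Nat.cast_nonneg _))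
    have hev : ∀ᶠ N : ℕ in Filter.atTop,
        ((A ∩ Set.Icc 1 N).ncard : ℝ) / N ≤ r := by
      filter_upwards [Filter.eventually_ge_atTop (max 1 N0)] with N hN
      have hN1 : 1 ≤ N := le_trans (le_max_left _ _) hN
      have hNpos : (0:ℝ) < N := by exact_mod_cast hN1
      rw [div_le_iff₀ hNpos]
      exact hkey N (le_trans (le_max_right _ _) hN)
    exact lt_of_le_of_lt (Filter.limsup_le_of_le hb hev) hr1
  · by_contra hfin
    rw [Set.not_infinite] at hfin
    obtain ⟨M, hM⟩ := hfin.bddAbove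
    have h1r : 0 < 1 - r := by linarith
    obtain ⟨N, hNdef⟩ : ∃ N : ℕ,
        N = max N0 (max (M + 1) (⌈((M : ℝ) + 1) / (1 - r)⌉₊ + 1)) := ⟨_, rfl⟩
    have hNN0 : N0 ≤ N := by rw [hNdef]; exact le_max_left _ _
    have hNM : M + 1 ≤ N := by
      rw [hNdef]; exact le_trans (le_max_left _ _) (le_max_right _ _)
    have hNr : ((M : ℝ) + 1) / (1 - r) ≤ (N : ℝ) := by
      have hh : (⌈((M : ℝ) + 1) / (1 - r)⌉₊ + 1 : ℕ) ≤ N := by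
        rw [hNdef]; exact le_trans (le_max_right _ _) (le_max_right _ _)
      have h2 : ((⌈((M : ℝ) + 1) / (1 - r)⌉₊ : ℕ) : ℝ) ≤ (N : ℝ) :=
        Nat.cast_le.mpr (by omega)
      linarith [Nat.le_ceil (((M : ℝ) + 1) / (1 - r))]
    have hsub2 : Set.Icc (M + 1) N ⊆ A ∩ Set.Icc 1 N := by
      intro m hm
      rw [Set.mem_Icc] at hm
      have hmA : m ∈ A := by
        by_contra hmA
        have hle : m ≤ M := hM hmA
        omega
      exact ⟨hmA, Set.mem_Icc.mpr ⟨by omega, hm.2⟩⟩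
    have hcard : N - M ≤ (A ∩ Set.Icc 1 N).ncard := by
      have hfin2 : (A ∩ Set.Icc 1 N).Finite :=
        Set.Finite.subset (Set.finite_Icc 1 N) Set.inter_subset_right
      have hIcc : (Set.Icc (M + 1) N).ncard = N - M := by
        rw [← Finset.coe_Icc, Set.ncard_coe_finset, Nat.card_Icc]
        omega
      rw [← hIcc]
      exact Set.ncard_le_ncard hsub2 hfin2
    have hk := hkey N hNN0
    have hNMr : (N : ℝ) - M ≤ r * N := by
      have hcc : ((N - M : ℕ) : ℝ) ≤ ((A ∩ Set.Icc 1 N).ncard : ℝ) := Nat.cast_le.mpr hcard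
      rw [Nat.cast_sub (by omega)] at hcc
      linarith
    rw [div_le_iff₀ h1r] at hNr
    nlinarith
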